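/- arXiv:2407.21595 — 2 statements merged into one kernel-verified Lean document; each statement's English description precedes it below -/
import Mathlib

section
/- Let χ : ℝ → [0,1] be a smooth cut-off with χ = 1 on (−1/2, 1/2), χ = 0 outside (−1,1), sign(r)χ'(r) ≤ 0 and |χ'| ≤ 5/2. Let ψ : U → ℝᵈ be C² with ‖Dψ(y)‖ ≤ 4/a on a tubular neighborhood U of width 2a, and define s_h(y) = y + h·ψ(y) extended by the identity outside U. Then for every |h| ≤ a/8, s_h is a bijection of the closure of Y onto itself with ‖D s_h(y)‖ ≤ 2 and ‖(D s_h(y))⁻¹‖ ≤ 2 for all y. -/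
/-- The Hanzawa transformation `s_h(y) = y + h·ψ(y)` (identity outside the tubular
neighborhood `U`) is, for `|h| ≤ a/8`, a bijection of the closure of `Y` onto itself
with `‖D s_h‖ ≤ 2` and `‖(D s_h)⁻¹‖ ≤ 2`. -/
theorem stmt_10 {d : ℕ} (a : ℝ) (ha : 0 < a)
    (χ : ℝ → ℝ) (hχsm : ContDiff ℝ (⊤ : ℕ∞) χ) (hχ01 : ∀ r, χ r ∈ Set.Icc (0 : ℝ) 1)
    (hχ1 : ∀ r ∈ Set.Ioo (-(1 / 2) : ℝ) (1 / 2), χ r = 1)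
    (hχ0 : ∀ r, r ∉ Set.Ioo (-1 : ℝ) 1 → χ r = 0)
    (hχ' : ∀ r, Real.sign r * deriv χ r ≤ 0) (hχ'b : ∀ r, |deriv χ r| ≤ 5 / 2)
    (U Y : Set (EuclideanSpace ℝ (Fin d))) (hUopen : IsOpen U) (hUY : U ⊆ closure Y)
    (ψ : EuclideanSpace ℝ (Fin d) → EuclideanSpace ℝ (Fin d))
    (hψ : ContDiff ℝ 2 ψ)
    (hψ0 : ∀ y ∉ U, ψ y = 0)
    (hDψ : ∀ y ∈ U, ‖fderiv ℝ ψ y‖ ≤ 4 / a)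
    (s : ℝ → EuclideanSpace ℝ (Fin d) → EuclideanSpace ℝ (Fin d))
    (hs : ∀ h y, s h y = y + h • ψ y) :
    ∀ h : ℝ, |h| ≤ a / 8 →
      Set.BijOn (s h) (closure Y) (closure Y) ∧
      (∀ y, ‖fderiv ℝ (s h) y‖ ≤ 2) ∧
      (∀ y, ∃ g : EuclideanSpace ℝ (Fin d) →L[ℝ] EuclideanSpace ℝ (Fin d),
        (fderiv ℝ (s h) y).comp g = ContinuousLinearMap.id ℝ _ ∧
        g.comp (fderiv ℝ (s h) y) = ContinuousLinearMap.id ℝ _ ∧ ‖g‖ ≤ 2) := by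
  classical
  intro h hh
  have ha8 : 0 < a / 8 := by linarith
  have hdiff : Differentiable ℝ ψ := hψ.differentiable (by norm_num)
  -- global derivative bound
  have hDψ' : ∀ y, ‖fderiv ℝ ψ y‖ ≤ 4 / a := by
    intro y
    by_cases hy : y ∈ closure U
    · have hcl : IsClosed {x : EuclideanSpace ℝ (Fin d) | ‖fderiv ℝ ψ x‖ ≤ 4 / a} :=
        isClosed_le ((hψ.continuous_fderiv (by norm_num)).norm) continuous_const
    -- closure U ⊆ the set
      exact closure_minimal (fun x hx => hDψ x hx) hcl hy
    · have hev : ψ =ᶠ[nhds y] fun _ => (0 : EuclideanSpace ℝ (Fin d)) := by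
        refine Filter.eventuallyEq_of_mem
          ((isClosed_closure.isOpen_compl).mem_nhds hy) ?_
        intro x hx
        exact hψ0 x fun hxU => hx (subset_closure hxU)
      have h0 : fderiv ℝ ψ y = fderiv ℝ (fun _ : EuclideanSpace ℝ (Fin d) => (0 : EuclideanSpace ℝ (Fin d))) y := hev.fderiv_eq
      rw [h0, fderiv_fun_const]
      simp only [Pi.zero_apply, norm_zero]
      positivity
  have hC : (0 : ℝ) ≤ 4 / a := by positivity
  have hlip : LipschitzWith ⟨4 / a, hC⟩ ψ :=
    lipschitzWith_of_nnnorm_fderiv_le hdiff fun x => by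
      change (‖fderiv ℝ ψ x‖₊ : ℝ) ≤ 4 / a; rw [coe_nnnorm]; exact hDψ' x
  have key : ∀ x z : EuclideanSpace ℝ (Fin d), ‖h • ψ x - h • ψ z‖ ≤ 1 / 2 * ‖x - z‖ := by
    intro x z
    have h1 : ‖ψ x - ψ z‖ ≤ 4 / a * ‖x - z‖ := by
      have := hlip.dist_le_mul x z
      rw [dist_eq_norm, dist_eq_norm] at this; exact this
    have h2 : ‖h • ψ x - h • ψ z‖ = |h| * ‖ψ x - ψ z‖ := by
      rw [← smul_sub, norm_smul, Real.norm_eq_abs]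
    rw [h2]
    calc |h| * ‖ψ x - ψ z‖ ≤ a / 8 * (4 / a * ‖x - z‖) :=
          mul_le_mul hh h1 (norm_nonneg _) (le_of_lt ha8)
      _ = 1 / 2 * ‖x - z‖ := by field_simp; ring
  -- s h fixes points outside U
  have hfix : ∀ z ∉ U, s h z = z := fun z hz => by
    rw [hs, hψ0 z hz, smul_zero, add_zero]
  -- injectivity
  have hinj : Function.Injective (s h) := by
    intro x z hxz
    rw [hs, hs] at hxz
    have h2 : x - z = h • ψ z - h • ψ x :=
      sub_eq_sub_iff_add_eq_add.mpr (by rw [hxz]; exact add_comm _ _)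
    have h3 : ‖x - z‖ ≤ 1 / 2 * ‖x - z‖ := by
      calc ‖x - z‖ = ‖h • ψ z - h • ψ x‖ := by rw [h2]
        _ ≤ 1 / 2 * ‖z - x‖ := key z x
        _ = 1 / 2 * ‖x - z‖ := by rw [norm_sub_rev]
    have : ‖x - z‖ = 0 := le_antisymm (by linarith) (norm_nonneg _)
    exact sub_eq_zero.mp (norm_eq_zero.mp this)
  -- surjectivity with control
  have hsurj : ∀ z : EuclideanSpace ℝ (Fin d), ∃ y : EuclideanSpace ℝ (Fin d), s h y = z ∧ (y ∉ U → y = z) := by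
    intro z
    have hF : ContractingWith (1 / 2 : NNReal) fun y : EuclideanSpace ℝ (Fin d) => z - h • ψ y := by
      constructor
      · have h12 : ((1 / 2 : NNReal) : ℝ) < 1 := by norm_num
        exact_mod_cast h12
      · apply LipschitzWith.of_dist_le_mul
        intro x w
        simp only [dist_eq_norm]
        have he : (z - h • ψ x) - (z - h • ψ w) = h • ψ w - h • ψ x := by abel
        rw [he]
        calc ‖h • ψ w - h • ψ x‖ ≤ 1 / 2 * ‖w - x‖ := key w x
          _ = (1 / 2 : NNReal) * ‖x - w‖ := by rw [norm_sub_rev]; norm_num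
    set y := ContractingWith.fixedPoint _ hF with hy
    have hyfix : z - h • ψ y = y := hF.fixedPoint_isFixedPt
    have hsy : s h y = z := by
      rw [hs]
      have : z = y + h • ψ y := sub_eq_iff_eq_add.mp hyfix
      exact this.symm
    refine ⟨y, hsy, fun hyU => ?_⟩
    rw [← hsy, hfix y hyU]
  -- U is invariant
  have hmapU : ∀ y ∈ U, s h y ∈ U := by
    intro y hyU
    by_contra hzU
    have : s h (s h y) = s h y := hfix _ hzU
    have h5 := hinj this
    exact hzU (by rw [h5]; exact hyU)
  -- derivative
  have hfd : ∀ y : EuclideanSpace ℝ (Fin d), HasFDerivAt (s h)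
      (ContinuousLinearMap.id ℝ (EuclideanSpace ℝ (Fin d)) + h • fderiv ℝ ψ y) y := by
    intro y
    have hse : s h = fun x : EuclideanSpace ℝ (Fin d) => x + h • ψ x := funext (hs h)
    rw [hse]
    exact (hasFDerivAt_id y).add ((hdiff y).hasFDerivAt.const_smul h)
  have hDs : ∀ y, fderiv ℝ (s h) y = ContinuousLinearMap.id ℝ (EuclideanSpace ℝ (Fin d)) + h • fderiv ℝ ψ y :=
    fun y => (hfd y).fderiv
  have hBnorm : ∀ y : EuclideanSpace ℝ (Fin d), ‖h • fderiv ℝ ψ y‖ ≤ 1 / 2 := by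
    intro y
    rw [norm_smul, Real.norm_eq_abs]
    calc |h| * ‖fderiv ℝ ψ y‖ ≤ a / 8 * (4 / a) :=
          mul_le_mul hh (hDψ' y) (norm_nonneg _) (le_of_lt ha8)
      _ = 1 / 2 := by field_simp; ring
  refine ⟨⟨?_, hinj.injOn, ?_⟩, ?_, ?_⟩
  · -- MapsTo
    intro y hy
    by_cases hyU : y ∈ U
    · exact hUY (hmapU y hyU)
    · rw [hfix y hyU]; exact hy
  · -- SurjOn
    intro z hz
    obtain ⟨y, hy1, hy2⟩ := hsurj z
    by_cases hyU : y ∈ U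
    · exact ⟨y, hUY hyU, hy1⟩
    · exact ⟨y, (hy2 hyU) ▸ hz, hy1⟩
  · -- derivative norm
    intro y
    rw [hDs y]
    calc ‖ContinuousLinearMap.id ℝ (EuclideanSpace ℝ (Fin d)) + h • fderiv ℝ ψ y‖
        ≤ ‖ContinuousLinearMap.id ℝ (EuclideanSpace ℝ (Fin d))‖ + ‖h • fderiv ℝ ψ y‖ := norm_add_le _ _
      _ ≤ 1 + 1 / 2 := add_le_add ContinuousLinearMap.norm_id_le (hBnorm y)
      _ ≤ 2 := by norm_num
  · -- inverse
    intro y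
    set B : EuclideanSpace ℝ (Fin d) →L[ℝ] EuclideanSpace ℝ (Fin d) := h • fderiv ℝ ψ y with hB
    have hlt : ‖-B‖ < 1 := by rw [norm_neg]; linarith [hBnorm y]
    have hval : ((Units.oneSub (-B) hlt : (EuclideanSpace ℝ (Fin d) →L[ℝ] EuclideanSpace ℝ (Fin d))ˣ) : EuclideanSpace ℝ (Fin d) →L[ℝ] EuclideanSpace ℝ (Fin d))
        = fderiv ℝ (s h) y := by
      show 1 - -B = _
      rw [hDs y, sub_neg_eq_add, ContinuousLinearMap.one_def]
    refine ⟨((Units.oneSub (-B) hlt)⁻¹ : (EuclideanSpace ℝ (Fin d) →L[ℝ] EuclideanSpace ℝ (Fin d))ˣ), ?_, ?_, ?_⟩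
    · rw [← ContinuousLinearMap.mul_def, ← hval, ← ContinuousLinearMap.one_def]
      exact Units.mul_inv _
    · rw [← ContinuousLinearMap.mul_def, ← hval, ← ContinuousLinearMap.one_def]
      exact Units.inv_mul _
    · have ht := tsum_geometric_le_of_norm_lt_one (-B) hlt
      have h1n : ‖(1 : EuclideanSpace ℝ (Fin d) →L[ℝ] EuclideanSpace ℝ (Fin d))‖ ≤ 1 := by
        rw [ContinuousLinearMap.one_def]; exact ContinuousLinearMap.norm_id_le
      have hinv : (1 - ‖-B‖)⁻¹ ≤ 2 := by
        rw [norm_neg]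
        have hb := hBnorm y
        have hhalf : (1 : ℝ) / 2 ≤ 1 - ‖B‖ := by linarith
        calc (1 - ‖B‖)⁻¹ ≤ ((1 : ℝ) / 2)⁻¹ := by
              apply inv_anti₀ (by norm_num) hhalf
          _ = 2 := by norm_num
      calc ‖(((Units.oneSub (-B) hlt)⁻¹ : (EuclideanSpace ℝ (Fin d) →L[ℝ] EuclideanSpace ℝ (Fin d))ˣ) : EuclideanSpace ℝ (Fin d) →L[ℝ] EuclideanSpace ℝ (Fin d))‖
          = ‖∑' n : ℕ, (-B) ^ n‖ := rfl
        _ ≤ ‖(1 : EuclideanSpace ℝ (Fin d) →L[ℝ] EuclideanSpace ℝ (Fin d))‖ - 1 + (1 - ‖-B‖)⁻¹ := ht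
        _ ≤ 2 := by linarith
end

section
/- In the setting of the transformed cell problems, let ξ_j(h₁), ξ_j(h₂) be the solutions for heights h₁, h₂ ∈ [−a*, a*]. If ‖J_{h₁} − J_{h₂}‖_∞ + ‖F_{h₁}⁻¹ − F_{h₂}⁻¹‖_∞ ≤ L|h₁ − h₂| and the bilinear forms are uniformly elliptic and bounded, then ‖ξ_j(h₁) − ξ_j(h₂)‖_{H¹(Y∖Y₀)} ≤ C|h₁ − h₂|, with C independent of h₁, h₂. -/
/-- Lipschitz dependence of the cell solutions on the height parameter: if the coefficients
(bilinear forms and functionals) are uniformly elliptic, bounded, and Lipschitz in `h`, then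
the solutions satisfy `‖ξ(h₁) - ξ(h₂)‖ ≤ C|h₁ - h₂|` with `C` independent of `h₁, h₂`. -/
theorem stmt_13 {V : Type*} [NormedAddCommGroup V] [InnerProductSpace ℝ V] [CompleteSpace V]
    (astar L c Cb : ℝ) (hc : 0 < c)
    (B : ℝ → V →L[ℝ] V →L[ℝ] ℝ) (ℓ : ℝ → V →L[ℝ] ℝ)
    (hcoer : ∀ h ∈ Set.Icc (-astar) astar, ∀ v : V, c * ‖v‖ ^ 2 ≤ B h v v)
    (hBb : ∀ h ∈ Set.Icc (-astar) astar, ‖B h‖ ≤ Cb)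
    (hℓb : ∀ h ∈ Set.Icc (-astar) astar, ‖ℓ h‖ ≤ Cb)
    (hBLip : ∀ h₁ ∈ Set.Icc (-astar) astar, ∀ h₂ ∈ Set.Icc (-astar) astar,
      ‖B h₁ - B h₂‖ ≤ L * |h₁ - h₂|)
    (hℓLip : ∀ h₁ ∈ Set.Icc (-astar) astar, ∀ h₂ ∈ Set.Icc (-astar) astar,
      ‖ℓ h₁ - ℓ h₂‖ ≤ L * |h₁ - h₂|) :
    ∃ C : ℝ, ∀ h₁ ∈ Set.Icc (-astar) astar, ∀ h₂ ∈ Set.Icc (-astar) astar,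
      ∀ ξ₁ ξ₂ : V, (∀ φ : V, B h₁ ξ₁ φ = ℓ h₁ φ) → (∀ φ : V, B h₂ ξ₂ φ = ℓ h₂ φ) →
        ‖ξ₁ - ξ₂‖ ≤ C * |h₁ - h₂| := by
  refine ⟨max 0 (L * (1 + Cb / c) / c), ?_⟩
  intro h₁ hh₁ h₂ hh₂ ξ₁ ξ₂ hξ₁ hξ₂
  set e := ξ₁ - ξ₂ with he
  set M := L * |h₁ - h₂| with hM
  have hCb : 0 ≤ Cb := le_trans (norm_nonneg _) (hℓb h₂ hh₂)
  have hMnn : 0 ≤ M := le_trans (norm_nonneg _) (hℓLip h₁ hh₁ h₂ hh₂)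
  -- bound on ξ₂
  have hξ2b : ‖ξ₂‖ ≤ Cb / c := by
    have h1 : c * ‖ξ₂‖ ^ 2 ≤ Cb * ‖ξ₂‖ := by
      calc c * ‖ξ₂‖ ^ 2 ≤ B h₂ ξ₂ ξ₂ := hcoer h₂ hh₂ ξ₂
        _ = ℓ h₂ ξ₂ := hξ₂ ξ₂
        _ ≤ ‖ℓ h₂ ξ₂‖ := by rw [Real.norm_eq_abs]; exact le_abs_self _
        _ ≤ ‖ℓ h₂‖ * ‖ξ₂‖ := (ℓ h₂).le_opNorm ξ₂
        _ ≤ Cb * ‖ξ₂‖ := mul_le_mul_of_nonneg_right (hℓb h₂ hh₂) (norm_nonneg _)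
    rcases eq_or_lt_of_le (norm_nonneg ξ₂) with h0 | h0
    · rw [← h0]; positivity
    · rw [le_div_iff₀ hc]
      nlinarith
  -- key identity
  have hid : (B h₁) e e = (ℓ h₁ - ℓ h₂) e - ((B h₁ - B h₂) ξ₂) e := by
    have h3 : (B h₁) e e = B h₁ ξ₁ e - B h₁ ξ₂ e := by
      rw [he, map_sub]; simp; ring
    rw [h3, hξ₁ e]
    have h2 : B h₁ ξ₂ e = B h₂ ξ₂ e + ((B h₁ - B h₂) ξ₂) e := by simp
    rw [h2, hξ₂ e]
    simp
    ring
  have hkey : c * ‖e‖ ^ 2 ≤ M * ‖e‖ + M * (Cb / c) * ‖e‖ := by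
    calc c * ‖e‖ ^ 2 ≤ (B h₁) e e := hcoer h₁ hh₁ e
      _ = (ℓ h₁ - ℓ h₂) e - ((B h₁ - B h₂) ξ₂) e := hid
      _ ≤ ‖(ℓ h₁ - ℓ h₂) e‖ + ‖((B h₁ - B h₂) ξ₂) e‖ := by
          calc (ℓ h₁ - ℓ h₂) e - ((B h₁ - B h₂) ξ₂) e
              ≤ |(ℓ h₁ - ℓ h₂) e - ((B h₁ - B h₂) ξ₂) e| := le_abs_self _
            _ ≤ |(ℓ h₁ - ℓ h₂) e| + |((B h₁ - B h₂) ξ₂) e| := abs_sub _ _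
            _ = ‖(ℓ h₁ - ℓ h₂) e‖ + ‖((B h₁ - B h₂) ξ₂) e‖ := rfl
      _ ≤ M * ‖e‖ + M * (Cb / c) * ‖e‖ := by
          have b1 : ‖(ℓ h₁ - ℓ h₂) e‖ ≤ M * ‖e‖ := by
            calc ‖(ℓ h₁ - ℓ h₂) e‖ ≤ ‖ℓ h₁ - ℓ h₂‖ * ‖e‖ := (ℓ h₁ - ℓ h₂).le_opNorm e
              _ ≤ M * ‖e‖ := mul_le_mul_of_nonneg_right (hℓLip h₁ hh₁ h₂ hh₂) (norm_nonneg _)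
          have b2 : ‖((B h₁ - B h₂) ξ₂) e‖ ≤ M * (Cb / c) * ‖e‖ := by
            calc ‖((B h₁ - B h₂) ξ₂) e‖ ≤ ‖(B h₁ - B h₂) ξ₂‖ * ‖e‖ :=
                  ((B h₁ - B h₂) ξ₂).le_opNorm e
              _ ≤ (‖B h₁ - B h₂‖ * ‖ξ₂‖) * ‖e‖ :=
                  mul_le_mul_of_nonneg_right ((B h₁ - B h₂).le_opNorm ξ₂) (norm_nonneg _)
              _ ≤ (M * (Cb / c)) * ‖e‖ := by
                  have hBd := hBLip h₁ hh₁ h₂ hh₂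
                  have hmm : ‖B h₁ - B h₂‖ * ‖ξ₂‖ ≤ M * (Cb / c) :=
                    mul_le_mul hBd hξ2b (norm_nonneg _) hMnn
                  exact mul_le_mul_of_nonneg_right hmm (norm_nonneg _)
          linarith
  rcases eq_or_lt_of_le (norm_nonneg e) with h0 | h0
  · rw [← h0]
    have : 0 ≤ max 0 (L * (1 + Cb / c) / c) * |h₁ - h₂| := by positivity
    linarith
  · have step : c * ‖e‖ ≤ M * (1 + Cb / c) := by nlinarith
    have hfin : ‖e‖ ≤ M * (1 + Cb / c) / c := by
      rw [le_div_iff₀ hc]; linarith [step]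
    calc ‖e‖ ≤ M * (1 + Cb / c) / c := hfin
      _ = (L * (1 + Cb / c) / c) * |h₁ - h₂| := by rw [hM]; ring
      _ ≤ max 0 (L * (1 + Cb / c) / c) * |h₁ - h₂| := by
          gcongr
          exact le_max_right _ _
end
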